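/- Let q be a power of a prime, let r ≥ 2 be an integer, and let a = a_1/a_2 ∈ K = F_q(t) for nonzero coprime polynomials a_1, a_2 ∈ F_q[t]. Then for each non-constant polynomial P(T) ∈ F_q[T], the map z ↦ a_2^{q^{r·deg_T(P)}}·Φ^{(z)}_{P(T)}(a) is a polynomial in F_q[t][z] of height at most (2 + deg(a))^{q^{r·deg_T(P)}}, where deg(a) = max{deg_t(a_1), deg_t(a_2)}. -/

import Mathlib

/-!
Put `n_i = q^(r i)` and `B_i = a₂^(n_i)·Φ^{∘i}(a)`. Since `Φ^{∘(i+1)} = φ ∘ Φ^{∘i}`,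
`B_{i+1} = t·a₂^(n_i(q^r-1))·B_i + z·a₂^(n_i(q^r-q))·B_i^q + B_i^(q^r)`, so every `B_i` lies in
`F_q[t][z]`, and by induction its height is at most `(1 + deg a)·n_i`. Multiplying the `i`-th term
of `Φ_P(a)` by the missing power `a₂^(n_d - n_i)` keeps the height below `(1 + deg a)·n_d`, which
Bernoulli's inequality bounds by `(2 + deg a)^(n_d)`.
-/

open Polynomial

/-- The map `x ↦ t·x + z·x^q + x^{q^r}` on `K[z]`, where `K = F_q(t)` and the parameter
`z` is the polynomial variable. -/
noncomputable def drinfeldPolyPhi (q r : ℕ) {Fq : Type*} [Field Fq]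
    (x : Polynomial (RatFunc Fq)) : Polynomial (RatFunc Fq) :=
  C RatFunc.X * x + X * x ^ q + x ^ q ^ r

/-- `Φ^{(z)}_{P(T)}(a)` viewed as a polynomial in the parameter `z`, with coefficients
in `K = F_q(t)`. -/
noncomputable def drinfeldPolyAct (q r : ℕ) {Fq : Type*} [Field Fq]
    (P : Polynomial Fq) (a : RatFunc Fq) : Polynomial (RatFunc Fq) :=
  ∑ i ∈ Finset.range (P.natDegree + 1),
    C (algebraMap Fq (RatFunc Fq) (P.coeff i)) * (drinfeldPolyPhi q r)^[i] (C a)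

/-- The height of a polynomial `g ∈ F_q[t][z]`: the maximum of the `t`-degrees of its
coefficients. -/
noncomputable def polyHeight {Fq : Type*} [Field Fq] (g : Polynomial (Polynomial Fq)) : ℕ :=
  g.support.sup fun i => (g.coeff i).natDegree

section PolyHeight

variable {Fq : Type*} [Field Fq]

lemma polyHeight_le_iff {g : Fq[X][X]} {n : ℕ} :
    polyHeight g ≤ n ↔ ∀ i, (g.coeff i).natDegree ≤ n := by
  refine Finset.sup_le_iff.trans ⟨fun h i => ?_, fun h i _ => h i⟩
  by_cases hi : i ∈ g.support
  · exact h i hi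
  · simp [notMem_support_iff.mp hi]

lemma natDegree_coeff_le_polyHeight (g : Fq[X][X]) (i : ℕ) :
    (g.coeff i).natDegree ≤ polyHeight g :=
  polyHeight_le_iff.mp le_rfl i

@[simp]
lemma polyHeight_C (p : Fq[X]) : polyHeight (C p) = p.natDegree := by
  refine le_antisymm (polyHeight_le_iff.mpr fun i => ?_) ?_
  · rw [coeff_C]
    split_ifs <;> simp
  · simpa using natDegree_coeff_le_polyHeight (C p) 0

@[simp]
lemma polyHeight_X : polyHeight (X : Fq[X][X]) = 0 :=
  Nat.le_zero.mp <| polyHeight_le_iff.mpr fun i => by rw [coeff_X]; split_ifs <;> simp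

lemma polyHeight_add_le (f g : Fq[X][X]) :
    polyHeight (f + g) ≤ max (polyHeight f) (polyHeight g) :=
  polyHeight_le_iff.mpr fun i => (coeff_add f g i ▸ natDegree_add_le _ _).trans <|
    max_le_max (natDegree_coeff_le_polyHeight f i) (natDegree_coeff_le_polyHeight g i)

lemma polyHeight_sum_le {ι : Type*} (s : Finset ι) (f : ι → Fq[X][X]) {n : ℕ}
    (h : ∀ i ∈ s, polyHeight (f i) ≤ n) : polyHeight (∑ i ∈ s, f i) ≤ n :=
  polyHeight_le_iff.mpr fun k => by
    rw [finsetSum_coeff]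
    exact natDegree_sum_le_of_forall_le _ _ fun i hi =>
      (natDegree_coeff_le_polyHeight _ k).trans (h i hi)

lemma polyHeight_mul_le (f g : Fq[X][X]) :
    polyHeight (f * g) ≤ polyHeight f + polyHeight g :=
  polyHeight_le_iff.mpr fun k => by
    rw [coeff_mul]
    exact natDegree_sum_le_of_forall_le _ _ fun x _ => natDegree_mul_le.trans <|
      add_le_add (natDegree_coeff_le_polyHeight f x.1) (natDegree_coeff_le_polyHeight g x.2)

lemma polyHeight_pow_le (f : Fq[X][X]) (n : ℕ) : polyHeight (f ^ n) ≤ n * polyHeight f := by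
  induction n with
  | zero => rw [pow_zero, ← C_1, polyHeight_C]; simp
  | succ n ih =>
    calc polyHeight (f ^ (n + 1)) ≤ polyHeight (f ^ n) + polyHeight f :=
          pow_succ f n ▸ polyHeight_mul_le _ _
      _ ≤ (n + 1) * polyHeight f := by rw [add_one_mul]; gcongr

end PolyHeight

noncomputable def drinfeldIntStep {Fq : Type*} [Field Fq] (q Q n : ℕ) (c : Fq[X])
    (B : Fq[X][X]) : Fq[X][X] :=
  C (X * c ^ (n * (Q - 1))) * B + X * C (c ^ (n * (Q - q))) * B ^ q + B ^ Q

lemma homogenize_drinfeld_step {S : Type*} [CommRing S] (τ ζ c x : S) {q Q n : ℕ}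
    (hQ : 1 ≤ Q) (hqQ : q ≤ Q) :
    τ * c ^ (n * (Q - 1)) * (c ^ n * x) + ζ * c ^ (n * (Q - q)) * (c ^ n * x) ^ q
        + (c ^ n * x) ^ Q = c ^ (n * Q) * (τ * x + ζ * x ^ q + x ^ Q) := by
  have h1 : c ^ (n * (Q - 1)) * c ^ n = c ^ (n * Q) := by
    rw [← pow_add, ← Nat.mul_add_one, Nat.sub_add_cancel hQ]
  have hq : c ^ (n * (Q - q)) * (c ^ n) ^ q = c ^ (n * Q) := by
    rw [← pow_mul, ← pow_add, ← Nat.mul_add, Nat.sub_add_cancel hqQ]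
  have hQ' : (c ^ n) ^ Q = c ^ (n * Q) := (pow_mul c n Q).symm
  linear_combination (τ * x) * h1 + (ζ * x ^ q) * hq + x ^ Q * hQ'

lemma map_drinfeldIntStep {Fq : Type*} [Field Fq] {q r n : ℕ} (hq : 1 ≤ q) (hr : 1 ≤ r)
    (c : Fq[X]) {B : Fq[X][X]} {x : (RatFunc Fq)[X]}
    (hB : B.map (algebraMap Fq[X] (RatFunc Fq)) = C (algebraMap Fq[X] (RatFunc Fq) c ^ n) * x) :
    (drinfeldIntStep q (q ^ r) n c B).map (algebraMap Fq[X] (RatFunc Fq)) =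
      C (algebraMap Fq[X] (RatFunc Fq) c ^ (n * q ^ r)) * drinfeldPolyPhi q r x := by
  simp only [drinfeldIntStep, drinfeldPolyPhi, Polynomial.map_add, Polynomial.map_mul,
    Polynomial.map_pow, Polynomial.map_C, Polynomial.map_X, map_mul, map_pow,
    RatFunc.algebraMap_X, hB]
  exact homogenize_drinfeld_step _ _ _ _ (Nat.one_le_pow _ _ hq)
    (by simpa using Nat.pow_le_pow_right hq hr)

lemma polyHeight_drinfeldIntStep_le {Fq : Type*} [Field Fq] {q Q n m : ℕ} {c : Fq[X]}
    {B : Fq[X][X]} (hn : 1 ≤ n) (hqQ : q ≤ Q) (hQ : 2 ≤ Q) (hc : c.natDegree ≤ m)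
    (hB : polyHeight B ≤ (1 + m) * n) :
    polyHeight (drinfeldIntStep q Q n c B) ≤ (1 + m) * (n * Q) := by
  have hdeg (k : ℕ) : (c ^ k).natDegree ≤ k * m :=
    natDegree_pow_le.trans (Nat.mul_le_mul_left k hc)
  have h₁ : polyHeight (C (X * c ^ (n * (Q - 1))) * B) ≤ (1 + m) * (n * Q) := by
    have hX : polyHeight (C (X * c ^ (n * (Q - 1)))) ≤ 1 + n * (Q - 1) * m := by
      rw [polyHeight_C]
      exact natDegree_mul_le.trans (add_le_add natDegree_X_le (hdeg _))
    obtain ⟨k, rfl⟩ : ∃ k, Q = k + 1 := ⟨Q - 1, by omega⟩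
    refine (polyHeight_mul_le _ _).trans ((add_le_add hX hB).trans ?_)
    rw [Nat.add_sub_cancel]
    nlinarith
  have h₂ : polyHeight (X * C (c ^ (n * (Q - q))) * B ^ q) ≤ (1 + m) * (n * Q) := by
    obtain ⟨j, rfl⟩ := Nat.exists_eq_add_of_le hqQ
    rw [Nat.add_sub_cancel_left]
    calc polyHeight (X * C (c ^ (n * j)) * B ^ q)
        ≤ polyHeight X + polyHeight (C (c ^ (n * j))) + polyHeight (B ^ q) :=
          (polyHeight_mul_le _ _).trans (Nat.add_le_add_right (polyHeight_mul_le _ _) _)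
      _ ≤ 0 + n * j * m + q * ((1 + m) * n) := by
          rw [polyHeight_X, polyHeight_C]
          gcongr
          exacts [hdeg _, (polyHeight_pow_le _ _).trans (Nat.mul_le_mul_left q hB)]
      _ ≤ (1 + m) * (n * (q + j)) := by nlinarith
  have h₃ : polyHeight (B ^ Q) ≤ (1 + m) * (n * Q) :=
    (polyHeight_pow_le _ _).trans ((Nat.mul_le_mul_left Q hB).trans_eq (by ring))
  exact (polyHeight_add_le _ _).trans
    (max_le ((polyHeight_add_le _ _).trans (max_le h₁ h₂)) h₃)

/-- `drinfeldIntIter q r a₁ a₂ i` is `a₂^(q^(ri))·Φ^{∘i}(a₁/a₂)` as a polynomial over `F_q[t]`. -/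
noncomputable def drinfeldIntIter {Fq : Type*} [Field Fq] (q r : ℕ) (a₁ a₂ : Fq[X]) :
    ℕ → Fq[X][X]
  | 0 => C a₁
  | i + 1 => drinfeldIntStep q (q ^ r) (q ^ (r * i)) a₂ (drinfeldIntIter q r a₁ a₂ i)

section DrinfeldIntIter

variable {Fq : Type*} [Field Fq] {q r : ℕ} {a₁ a₂ : Fq[X]}

lemma map_drinfeldIntIter (hq : 1 ≤ q) (hr : 1 ≤ r) {a : RatFunc Fq}
    (ha : algebraMap Fq[X] (RatFunc Fq) a₁ = a * algebraMap Fq[X] (RatFunc Fq) a₂) (i : ℕ) :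
    (drinfeldIntIter q r a₁ a₂ i).map (algebraMap Fq[X] (RatFunc Fq)) =
      C (algebraMap Fq[X] (RatFunc Fq) a₂ ^ q ^ (r * i)) * (drinfeldPolyPhi q r)^[i] (C a) := by
  induction i with
  | zero => simp [drinfeldIntIter, ha, mul_comm]
  | succ i ih =>
    rw [drinfeldIntIter, map_drinfeldIntStep hq hr a₂ ih, Function.iterate_succ_apply',
      Nat.mul_succ, pow_add]

lemma polyHeight_drinfeldIntIter_le (hq : 2 ≤ q) (hr : 1 ≤ r) {m : ℕ}
    (h₁ : a₁.natDegree ≤ m) (h₂ : a₂.natDegree ≤ m) (i : ℕ) :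
    polyHeight (drinfeldIntIter q r a₁ a₂ i) ≤ (1 + m) * q ^ (r * i) := by
  induction i with
  | zero => simpa [drinfeldIntIter] using h₁.trans (Nat.le_add_left m 1)
  | succ i ih =>
    have hqr : q ≤ q ^ r := by simpa using Nat.pow_le_pow_right (by omega) hr
    rw [drinfeldIntIter, Nat.mul_succ, pow_add]
    exact polyHeight_drinfeldIntStep_le (Nat.one_le_pow _ _ (by omega)) hqr (hq.trans hqr) h₂ ih

end DrinfeldIntIter

section Padding

variable {Fq : Type*} [Field Fq] {n N : ℕ} (u : Fq) (c : Fq[X]) {B : Fq[X][X]}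

lemma map_C_mul_pow_sub_mul (hnN : n ≤ N) {x : (RatFunc Fq)[X]}
    (hB : B.map (algebraMap Fq[X] (RatFunc Fq)) = C (algebraMap Fq[X] (RatFunc Fq) c ^ n) * x) :
    (C (C u * c ^ (N - n)) * B).map (algebraMap Fq[X] (RatFunc Fq)) =
      C (algebraMap Fq[X] (RatFunc Fq) c ^ N) * (C (algebraMap Fq (RatFunc Fq) u) * x) := by
  have hu : algebraMap Fq (RatFunc Fq) u = algebraMap Fq[X] (RatFunc Fq) (C u) := by
    rw [IsScalarTower.algebraMap_apply Fq Fq[X] (RatFunc Fq), Polynomial.algebraMap_eq]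
  rw [Polynomial.map_mul, hB, Polynomial.map_C, hu, ← Nat.sub_add_cancel hnN, pow_add]
  simp only [map_mul, map_pow, Nat.add_sub_cancel]
  ring

lemma polyHeight_C_mul_pow_sub_mul_le {m : ℕ} (hnN : n ≤ N) (hc : c.natDegree ≤ m)
    (hB : polyHeight B ≤ (1 + m) * n) :
    polyHeight (C (C u * c ^ (N - n)) * B) ≤ (1 + m) * N := by
  have hdeg : (C u * c ^ (N - n)).natDegree ≤ (N - n) * m :=
    natDegree_C_mul_le _ _ |>.trans (natDegree_pow_le.trans (Nat.mul_le_mul_left _ hc))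
  refine (polyHeight_mul_le _ _).trans ?_
  rw [polyHeight_C]
  obtain ⟨k, rfl⟩ := Nat.exists_eq_add_of_le hnN
  rw [Nat.add_sub_cancel_left] at hdeg ⊢
  nlinarith

end Padding

lemma one_add_mul_le_two_add_pow (m N : ℕ) : (1 + m) * N ≤ (2 + m) ^ N := by
  have := one_add_le_pow_of_two_add_nonneg (Nat.zero_le (2 + (1 + m))) N
  rw [← add_assoc, one_add_one_eq_two] at this
  linarith

theorem drinfeld_act_integrality_height_general
    {Fq : Type*} [Field Fq] [Fintype Fq] (q r : ℕ)
    (hq : Fintype.card Fq = q) (hr : 2 ≤ r)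
    (a₁ a₂ : Polynomial Fq) (ha₂ : a₂ ≠ 0)
    (a : RatFunc Fq)
    (ha : a = algebraMap (Polynomial Fq) (RatFunc Fq) a₁ /
            algebraMap (Polynomial Fq) (RatFunc Fq) a₂)
    (P : Polynomial Fq) :
    ∃ G : Polynomial (Polynomial Fq),
      G.map (algebraMap (Polynomial Fq) (RatFunc Fq)) =
        C ((algebraMap (Polynomial Fq) (RatFunc Fq) a₂) ^ q ^ (r * P.natDegree)) *
          drinfeldPolyAct q r P a ∧
      polyHeight G ≤ (2 + max a₁.natDegree a₂.natDegree) ^ q ^ (r * P.natDegree) := by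
  have hq₂ : 2 ≤ q := hq ▸ Fintype.one_lt_card
  have haa : algebraMap Fq[X] (RatFunc Fq) a₁ = a * algebraMap Fq[X] (RatFunc Fq) a₂ := by
    rw [ha, div_mul_cancel₀ _ (RatFunc.algebraMap_ne_zero ha₂)]
  have hle (i : ℕ) (hi : i ∈ Finset.range (P.natDegree + 1)) :
      q ^ (r * i) ≤ q ^ (r * P.natDegree) :=
    Nat.pow_le_pow_right (by omega) (Nat.mul_le_mul_left r (Finset.mem_range_succ_iff.mp hi))
  refine ⟨∑ i ∈ Finset.range (P.natDegree + 1),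
    C (C (P.coeff i) * a₂ ^ (q ^ (r * P.natDegree) - q ^ (r * i))) * drinfeldIntIter q r a₁ a₂ i,
    ?_, ?_⟩
  · rw [Polynomial.map_sum, drinfeldPolyAct, Finset.mul_sum]
    exact Finset.sum_congr rfl fun i hi => map_C_mul_pow_sub_mul _ _ (hle i hi)
      (map_drinfeldIntIter (by omega) (by omega) haa i)
  · refine (polyHeight_sum_le _ _ fun i hi => ?_).trans (one_add_mul_le_two_add_pow _ _)
    exact polyHeight_C_mul_pow_sub_mul_le _ _ (hle i hi) (le_max_right _ _)
      (polyHeight_drinfeldIntIter_le hq₂ (by omega) (le_max_left _ _) (le_max_right _ _) i)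

/-- For `a = a₁/a₂ ∈ K = F_q(t)` with `a₁, a₂` nonzero coprime, and a non-constant
`P(T) ∈ F_q[T]`, the map `z ↦ a₂^{q^{r·deg P}}·Φ^{(z)}_{P(T)}(a)` is a polynomial in
`F_q[t][z]` of height at most `(2 + deg a)^{q^{r·deg P}}`, where
`deg a = max(deg a₁, deg a₂)`. -/
theorem drinfeld_act_integrality_height
    {Fq : Type*} [Field Fq] [Fintype Fq] (q r : ℕ)
    (hq : Fintype.card Fq = q) (hr : 2 ≤ r)
    (a₁ a₂ : Polynomial Fq) (ha₁ : a₁ ≠ 0) (ha₂ : a₂ ≠ 0) (hcop : IsCoprime a₁ a₂)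
    (a : RatFunc Fq)
    (ha : a = algebraMap (Polynomial Fq) (RatFunc Fq) a₁ /
            algebraMap (Polynomial Fq) (RatFunc Fq) a₂)
    (P : Polynomial Fq) (hP : P.natDegree ≠ 0) :
    ∃ G : Polynomial (Polynomial Fq),
      G.map (algebraMap (Polynomial Fq) (RatFunc Fq)) =
        C ((algebraMap (Polynomial Fq) (RatFunc Fq) a₂) ^ q ^ (r * P.natDegree)) *
          drinfeldPolyAct q r P a ∧
      polyHeight G ≤ (2 + max a₁.natDegree a₂.natDegree) ^ q ^ (r * P.natDegree) :=
  drinfeld_act_integrality_height_general q r hq hr a₁ a₂ ha₂ a ha P
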